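/- arXiv:1612.06786 — 6 statements merged into one kernel-verified Lean document; each statement's English description precedes it below -/
import Mathlib

section
/- If φ satisfies 2π/3 < φ ≤ 2π/3 + 2π/7, then sin(φ) + sin(2φ) < 0. -/
open Real

namespace Real

theorem sin_add_sin_two_mul (x : ℝ) : sin x + sin (2 * x) = sin x * (1 + 2 * cos x) := by
  rw [sin_two_mul]; ring

theorem cos_two_pi_div_three : cos (2 * π / 3) = -(1 / 2) := by
  rw [show 2 * π / 3 = π - π / 3 by ring, cos_pi_sub, cos_pi_div_three]

theorem sin_add_sin_two_mul_neg {x : ℝ} (hx₁ : 2 * π / 3 < x) (hx₂ : x < π) :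
    sin x + sin (2 * x) < 0 := by
  have hsin : 0 < sin x := sin_pos_of_pos_of_lt_pi (by linarith [pi_pos]) hx₂
  have hcos : cos x < -(1 / 2) :=
    cos_two_pi_div_three ▸ cos_lt_cos_of_nonneg_of_le_pi (by positivity) hx₂.le hx₁
  rw [sin_add_sin_two_mul]
  exact mul_neg_of_pos_of_neg hsin (by linarith)

end Real

theorem stmt_0 (φ : ℝ) (h1 : 2 * π / 3 < φ) (h2 : φ ≤ 2 * π / 3 + 2 * π / 7) :
    Real.sin φ + Real.sin (2 * φ) < 0 :=
  sin_add_sin_two_mul_neg h1 (by linarith [pi_pos])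
end

section
/- If φ satisfies 2π/3 < φ ≤ 2π/3 + 2π/7, then -0.37 < sin(φ) + sin(2φ) < 0. -/
open Real

theorem stmt_2 (φ : ℝ) (h1 : 2 * π / 3 < φ) (h2 : φ ≤ 2 * π / 3 + 2 * π / 7) :
    -0.37 < Real.sin φ + Real.sin (2 * φ) ∧ Real.sin φ + Real.sin (2 * φ) < 0 := by
  have hπ : (3.141592 : ℝ) < π := by
    have := Real.pi_gt_d6
    linarith
  have hπ' : π < 3.141593 := by
    have := Real.pi_lt_d2
    have := Real.pi_lt_d6
    linarith
  have hφpos : 0 < φ := by nlinarith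
  have hφlt : φ < π := by nlinarith
  have hs : 0 < Real.sin φ := Real.sin_pos_of_pos_of_lt_pi hφpos hφlt
  have hc : Real.cos φ < -1/2 := by
    have h23 : Real.cos (2 * π / 3) = -1/2 := by
      have : (2 : ℝ) * π / 3 = π - π / 3 := by ring
      rw [this, Real.cos_pi_sub, Real.cos_pi_div_three]; norm_num
    have := Real.cos_lt_cos_of_nonneg_of_le_pi (by positivity : (0:ℝ) ≤ 2 * π / 3)
      (le_of_lt hφlt) h1
    linarith
  have hc1 : -1 ≤ Real.cos φ := Real.neg_one_le_cos φ
  have hsin2 : Real.sin (2 * φ) = 2 * Real.sin φ * Real.cos φ := Real.sin_two_mul φ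
  set s := Real.sin φ
  set c := Real.cos φ
  have hsc : s ^ 2 + c ^ 2 = 1 := Real.sin_sq_add_cos_sq φ
  have hneg : s + Real.sin (2 * φ) < 0 := by
    rw [hsin2]
    nlinarith
  refine ⟨?_, hneg⟩
  rw [hsin2] at hneg ⊢
  have hsq : (s + 2 * s * c) ^ 2 < 0.1369 := by
    have h1 : (s + 2 * s * c) ^ 2 = (1 - c ^ 2) * (1 + 2 * c) ^ 2 := by
      have : s ^ 2 = 1 - c ^ 2 := by linarith
      nlinarith [this]
    rw [h1]
    nlinarith [sq_nonneg (c + 0.843), sq_nonneg ((c + 0.843) * (c + 1)), sq_nonneg (c + 1), sq_nonneg ((c + 0.843) ^ 2)]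
  nlinarith [hsq, hneg]
end

section
/- If φ satisfies 2π/3 < φ ≤ 2π/3 + 2π/7, then (sin φ + sin 2φ + sin 3φ) − ((1 + cos φ + cos 2φ + cos 3φ)·tan φ − tan φ) > 0. -/
/-! Multiplying through by `cos φ`, the addition formula `sin a cos b - cos a sin b = sin (a - b)`
collapses the expression to `(sin φ + sin 2φ) / cos φ = sin φ (1 + 2 cos φ) / cos φ`.
For `2π/3 < φ < π` the numerator is negative (`sin φ > 0`, `cos φ < -1/2`) and so is `cos φ`. -/

open Real

theorem sin_sum_sub_cos_sum_mul_tan_sub_tan {φ : ℝ} (hc : cos φ ≠ 0) :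
    (sin φ + sin (2 * φ) + sin (3 * φ)) -
        ((1 + cos φ + cos (2 * φ) + cos (3 * φ)) * tan φ - tan φ) =
      sin φ * (1 + 2 * cos φ) / cos φ := by
  have h21 := sin_sub (2 * φ) φ
  have h31 := sin_sub (3 * φ) φ
  rw [show 2 * φ - φ = φ by ring] at h21
  rw [show 3 * φ - φ = 2 * φ by ring, sin_two_mul] at h31
  have hdiv : sin φ / cos φ * cos φ = sin φ := div_mul_cancel₀ _ hc
  rw [eq_div_iff hc, tan_eq_sin_div_cos]
  linear_combination -h21 - h31 - (cos φ + cos (2 * φ) + cos (3 * φ)) * hdiv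

theorem cos_lt_neg_half_of_two_pi_div_three_lt {φ : ℝ} (h1 : 2 * π / 3 < φ) (h2 : φ ≤ π) :
    cos φ < -(1 / 2) := by
  have hcos : cos (2 * π / 3) = -(1 / 2) := by
    rw [show 2 * π / 3 = π - π / 3 by ring, cos_pi_sub, cos_pi_div_three]
  rw [← hcos]
  exact cos_lt_cos_of_nonneg_of_le_pi (by positivity) h2 h1

theorem stmt_5 (φ : ℝ) (h1 : 2 * π / 3 < φ) (h2 : φ ≤ 2 * π / 3 + 2 * π / 7) :
    (Real.sin φ + Real.sin (2 * φ) + Real.sin (3 * φ)) -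
      ((1 + Real.cos φ + Real.cos (2 * φ) + Real.cos (3 * φ)) * Real.tan φ - Real.tan φ) > 0 := by
  have hφπ : φ < π := by linarith [pi_pos]
  have hsin : 0 < sin φ := sin_pos_of_pos_of_lt_pi (by linarith [pi_pos]) hφπ
  have hcos := cos_lt_neg_half_of_two_pi_div_three_lt h1 hφπ.le
  rw [gt_iff_lt, sin_sum_sub_cos_sum_mul_tan_sub_tan (by linarith)]
  exact div_pos_of_neg_of_neg (mul_neg_of_pos_of_neg hsin (by linarith)) (by linarith)
end

section
/- Let n ≥ 7 and φ = 2π(⌊n/3⌋+1)/n. Define points P₀=(0,0), P₁=(1,0), P₂=P₁+(cos φ, sin φ), P₃=P₂+(cos 2φ, sin 2φ), P₄=P₃+(cos 3φ, sin 3φ). Then the open segment P₂P₃ intersects the open segment P₀P₁. -/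
/-!
Write `c = cos φ`. Since `sin 2φ = 2 sin φ · c` and `cos 2φ = 2c² - 1`, the line through `P₂` in
direction `2φ` meets the `x`-axis at parameter `-1 / (2c)`, in the point `1 + 1 / (2c)`; both lie
in `(0, 1)` exactly when `c < -1/2`. For `n ≥ 7` the angle `φ` lies in `(2π/3, 4π/3)`, where this
holds.
-/

open Real

lemma Real.cos_lt_neg_half {φ : ℝ} (h₁ : 2 * π / 3 < φ) (h₂ : φ < 4 * π / 3) :
    cos φ < -(1 / 2) := by
  have hdist : |φ - π| < π / 3 := abs_sub_lt_iff.2 ⟨by linarith, by linarith⟩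
  have hcos : 1 / 2 < cos (φ - π) := by
    rw [← cos_abs, ← cos_pi_div_three]
    exact cos_lt_cos_of_nonneg_of_le_pi (abs_nonneg _) (by linarith [pi_pos]) hdist
  rw [cos_sub_pi] at hcos
  linarith

lemma openSegment_inter_nonempty_of_cos_lt_neg_half {φ : ℝ} (h : cos φ < -(1 / 2)) :
    (openSegment ℝ ((1, 0) + (cos φ, sin φ))
        ((1, 0) + (cos φ, sin φ) + (cos (2 * φ), sin (2 * φ))) ∩
      openSegment ℝ ((0, 0) : ℝ × ℝ) (1, 0)).Nonempty := by
  set c := cos φ with hc_def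
  have hc : c ≠ 0 := by linarith
  have ht : -1 / (2 * c) ∈ Set.Ioo (0 : ℝ) 1 :=
    ⟨div_pos_of_neg_of_neg (by norm_num) (by linarith),
      (div_lt_one_of_neg (by linarith)).2 (by linarith)⟩
  have hx : 1 + 1 / (2 * c) ∈ Set.Ioo (0 : ℝ) 1 := by
    have : 1 / (2 * c) = -(-1 / (2 * c)) := by ring
    constructor <;> linarith [ht.1, ht.2]
  refine ⟨(1 + 1 / (2 * c), 0), ?_, ?_⟩
  · rw [openSegment_eq_image']
    refine ⟨-1 / (2 * c), ht, ?_⟩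
    simp only [Prod.mk_add_mk, Prod.mk_sub_mk, Prod.smul_mk, smul_eq_mul, Prod.mk.injEq,
      cos_two_mul, sin_two_mul, ← hc_def]
    constructor <;> field_simp <;> ring
  · rw [openSegment_eq_image']
    exact ⟨1 + 1 / (2 * c), hx, by simp⟩

lemma two_pi_div_three_lt_angle {n : ℕ} (hn : 0 < n) :
    2 * π / 3 < 2 * π * ((⌊(n : ℝ) / 3⌋ : ℝ) + 1) / n := by
  have hn' : (0 : ℝ) < n := by exact_mod_cast hn
  have hfloor := Int.lt_floor_add_one ((n : ℝ) / 3)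
  rw [lt_div_iff₀ hn']
  nlinarith [pi_pos]

lemma angle_lt_four_pi_div_three {n : ℕ} (hn : 4 ≤ n) :
    2 * π * ((⌊(n : ℝ) / 3⌋ : ℝ) + 1) / n < 4 * π / 3 := by
  have hn' : (4 : ℝ) ≤ n := by exact_mod_cast hn
  have hfloor := Int.floor_le ((n : ℝ) / 3)
  rw [div_lt_iff₀ (by linarith)]
  nlinarith [pi_pos]

theorem stmt_14 (n : ℕ) (hn : 7 ≤ n) :
    let φ : ℝ := 2 * π * ((⌊(n : ℝ) / 3⌋ : ℝ) + 1) / n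
    let P0 : ℝ × ℝ := (0, 0)
    let P1 : ℝ × ℝ := (1, 0)
    let P2 : ℝ × ℝ := P1 + (Real.cos φ, Real.sin φ)
    let P3 : ℝ × ℝ := P2 + (Real.cos (2 * φ), Real.sin (2 * φ))
    (openSegment ℝ P2 P3 ∩ openSegment ℝ P0 P1).Nonempty :=
  openSegment_inter_nonempty_of_cos_lt_neg_half <| Real.cos_lt_neg_half
    (two_pi_div_three_lt_angle (by omega)) (angle_lt_four_pi_div_three (by omega))
end

section
/- Let φ ∈ (2π/3, 2π/3 + 2π/7]. Define P₀=(0,0), P₁=(1,0), P₂=P₁+(cos φ, sin φ), P₃=P₂+(cos 2φ, sin 2φ), P₄=P₃+(cos 3φ, sin 3φ). Then the open segment P₃P₄ intersects the open segment P₁P₂. -/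
open Real

/-!
Each edge is the previous one turned by `φ`, so the first and third edges sum to `2 cos φ` times
the second. Once `2 cos φ < -1` this forces the crossing: with `t = -1 / (2 cos φ) ∈ (0, 1)`,
`P₁ + (1 - t) • (P₂ - P₁) = P₃ + t • (P₄ - P₃)`.
-/

theorem openSegment_inter_openSegment_nonempty_of_add_eq_smul {𝕜 E : Type*} [Field 𝕜]
    [LinearOrder 𝕜] [IsStrictOrderedRing 𝕜] [AddCommGroup E] [Module 𝕜 E] (a u v w : E) {k : 𝕜}
    (hk : k < -1) (h : u + w = k • v) :
    (openSegment 𝕜 (a + u + v) (a + u + v + w) ∩ openSegment 𝕜 a (a + u)).Nonempty := by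
  set t : 𝕜 := -k⁻¹
  have hk0 : k < 0 := by linarith
  have ht0 : 0 < t := neg_pos.mpr (inv_lt_zero.mpr hk0)
  have ht1 : t < 1 := by
    rw [neg_lt, lt_inv_of_neg (by norm_num) hk0]
    simpa using hk
  have htk : t * k = -1 := by simp [t, hk0.ne]
  clear_value t
  refine ⟨a + u + v + t • w, ?_, ?_⟩
  · rw [openSegment_eq_image']
    exact ⟨t, ⟨ht0, ht1⟩, by simp⟩
  · rw [openSegment_eq_image']
    refine ⟨1 - t, ⟨by linarith, by linarith⟩, ?_⟩
    linear_combination (norm := module) (-t) • h - htk • v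

theorem cos_sin_add_cos_sin_three_mul (φ : ℝ) :
    ((cos φ, sin φ) : ℝ × ℝ) + (cos (3 * φ), sin (3 * φ)) =
      (2 * cos φ) • (cos (2 * φ), sin (2 * φ)) := by
  have hsum : (φ + 3 * φ) / 2 = 2 * φ := by ring
  have hdiff : (φ - 3 * φ) / 2 = -φ := by ring
  ext
  · simp only [Prod.fst_add, Prod.smul_fst, smul_eq_mul]
    rw [cos_add_cos, hsum, hdiff, cos_neg]
    ring
  · simp only [Prod.snd_add, Prod.smul_snd, smul_eq_mul]
    rw [sin_add_sin, hsum, hdiff, cos_neg]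
    ring

theorem stmt_15 (φ : ℝ) (h1 : 2 * π / 3 < φ) (h2 : φ ≤ 2 * π / 3 + 2 * π / 7) :
    let P1 : ℝ × ℝ := (1, 0)
    let P2 : ℝ × ℝ := P1 + (Real.cos φ, Real.sin φ)
    let P3 : ℝ × ℝ := P2 + (Real.cos (2 * φ), Real.sin (2 * φ))
    let P4 : ℝ × ℝ := P3 + (Real.cos (3 * φ), Real.sin (3 * φ))
    (openSegment ℝ P3 P4 ∩ openSegment ℝ P1 P2).Nonempty := by
  intro P1 P2 P3 P4
  have hcos : cos φ < -(1 / 2) := cos_lt_neg_half_of_two_pi_div_three_lt h1 (by linarith [pi_pos])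
  exact openSegment_inter_openSegment_nonempty_of_add_eq_smul _ _ _ _ (by linarith)
    (cos_sin_add_cos_sin_three_mul φ)
end

section
/- The three points of pairwise intersection among suitably reordered edges of a regular 7-gon exist: with unit vectors at angles 2πk/7, the ordering taking every 3rd vector (k = 0, 3, 6, 2 mod 7) produces four consecutive unit edges at angles 0, 6π/7, 12π/7, 4π/7 (relative rotation 6π/7 each step) such that edge 3 crosses edge 1, edge 4 crosses edge 2, and edge 4 crosses edge 1. -/
/-!
If a polyline turns by the same angle φ at every vertex, any three consecutive edge vectors satisfy
`e₀ + e₂ = 2 cos φ • e₁`. For `c = 2 cos φ < -1` this linear relation alone produces explicit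
crossing points: the third edge meets the first at `r • P₀ + (1 - r) • P₁` with `r = -1/c`
(applied to `P₁, …, P₄` this also makes the fourth edge meet the second), and, for any `c < 0`,
the fourth edge meets the first at the same kind of point with `r = 1/(1 - c)`.
For `φ = 6π/7` one has `2 cos φ < 2 cos (2π/3) = -1`.
-/

open Real Set

section Crossings

variable {E : Type*} [AddCommGroup E] [Module ℝ E] {P₀ P₁ P₂ P₃ P₄ : E} {c : ℝ}

lemma openSegment_inter_nonempty_of_eq {w x y z : E} {r : ℝ} (hr : r ∈ Ioo 0 1)
    (h : r • w + (1 - r) • x = (1 - r) • y + r • z) :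
    (openSegment ℝ y z ∩ openSegment ℝ w x).Nonempty :=
  ⟨_, ⟨1 - r, r, by linarith [hr.2], hr.1, by ring, h.symm⟩,
    ⟨r, 1 - r, hr.1, by linarith [hr.2], by ring, rfl⟩⟩

lemma third_edge_inter_first_nonempty (h : (P₁ - P₀) + (P₃ - P₂) = c • (P₂ - P₁))
    (hc : c < -1) : (openSegment ℝ P₂ P₃ ∩ openSegment ℝ P₀ P₁).Nonempty := by
  have hc₀ : c ≠ 0 := by linarith
  have hrc : (-c)⁻¹ * c = -1 := by field_simp
  refine openSegment_inter_nonempty_of_eq (r := (-c)⁻¹)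
    ⟨inv_pos.2 (by linarith), inv_lt_one_of_one_lt₀ (by linarith)⟩ ?_
  linear_combination (norm := module) (-(-c)⁻¹) • h - hrc • (P₂ - P₁)

lemma fourth_edge_inter_first_nonempty (h₁ : (P₁ - P₀) + (P₃ - P₂) = c • (P₂ - P₁))
    (h₂ : (P₂ - P₁) + (P₄ - P₃) = c • (P₃ - P₂)) (hc : c < 0) :
    (openSegment ℝ P₃ P₄ ∩ openSegment ℝ P₀ P₁).Nonempty := by
  have hc₁ : 1 - c ≠ 0 := by linarith
  have hrc : (1 - c)⁻¹ * (c - 1) = -1 := by field_simp; ring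
  refine openSegment_inter_nonempty_of_eq (r := (1 - c)⁻¹)
    ⟨inv_pos.2 (by linarith), inv_lt_one_of_one_lt₀ (by linarith)⟩ ?_
  linear_combination (norm := module) (-(1 - c)⁻¹) • (h₁ + h₂) - hrc • (P₃ - P₁)

end Crossings

lemma cos_sin_sub_add_cos_sin_add (θ φ : ℝ) :
    (cos (θ - φ), sin (θ - φ)) + (cos (θ + φ), sin (θ + φ)) = (2 * cos φ) • (cos θ, sin θ) := by
  ext <;> simp only [Prod.fst_add, Prod.snd_add, Prod.smul_fst, Prod.smul_snd, smul_eq_mul,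
    cos_add, cos_sub, sin_add, sin_sub] <;> ring

lemma two_mul_cos_six_pi_div_seven_lt : 2 * cos (6 * π / 7) < -1 := by
  have h := cos_lt_cos_of_nonneg_of_le_pi (x := 2 * π / 3) (y := 6 * π / 7)
    (by positivity) (by linarith [pi_pos]) (by linarith [pi_pos])
  rw [show 2 * π / 3 = π - π / 3 by ring, cos_pi_sub, cos_pi_div_three] at h
  linarith

theorem stmt_17 :
    let φ : ℝ := 6 * π / 7
    let P0 : ℝ × ℝ := (0, 0)
    let P1 : ℝ × ℝ := (1, 0)
    let P2 : ℝ × ℝ := P1 + (Real.cos φ, Real.sin φ)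
    let P3 : ℝ × ℝ := P2 + (Real.cos (2 * φ), Real.sin (2 * φ))
    let P4 : ℝ × ℝ := P3 + (Real.cos (3 * φ), Real.sin (3 * φ))
    (openSegment ℝ P2 P3 ∩ openSegment ℝ P0 P1).Nonempty ∧
    (openSegment ℝ P3 P4 ∩ openSegment ℝ P1 P2).Nonempty ∧
    (openSegment ℝ P3 P4 ∩ openSegment ℝ P0 P1).Nonempty := by
  intro φ P0 P1 P2 P3 P4
  have h₁ : (P1 - P0) + (P3 - P2) = (2 * cos φ) • (P2 - P1) := by
    simpa [P0, P1, P2, P3, two_mul] using cos_sin_sub_add_cos_sin_add φ φ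
  have h₂ : (P2 - P1) + (P4 - P3) = (2 * cos φ) • (P3 - P2) := by
    have h := cos_sin_sub_add_cos_sin_add (2 * φ) φ
    rw [show 2 * φ - φ = φ by ring, show 2 * φ + φ = 3 * φ by ring] at h
    simpa [P2, P3, P4] using h
  have hc := two_mul_cos_six_pi_div_seven_lt
  exact ⟨third_edge_inter_first_nonempty h₁ hc, third_edge_inter_first_nonempty h₂ hc,
    fourth_edge_inter_first_nonempty h₁ h₂ (by linarith)⟩
end
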